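/- Suppose 0 < α ≤ γ < 2 and 0 < α̂ ≤ γ̂ < 2. If (nπ/2)^α + (nπ/2)^γ = (nπ/2)^α̂ + (nπ/2)^γ̂ for all odd n ≥ 1, then α = α̂ and γ = γ̂. -/

import Mathlib

open Real Filter

/- The larger exponent governs the growth of `x ^ a + x ^ c`: if `c' < c`, then eventually
`x ^ (c - c') > 2`, so `x ^ c > 2 x ^ c' ≥ x ^ a' + x ^ c'`. Comparing along the odd points
`n π / 2 → ∞` gives `γ = γ'`, and then the single point `n = 1`, where `π / 2 ≠ 1`, gives
`α = α'`. -/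

theorem le_of_rpow_add_rpow_eq_frequently {ι : Type*} {l : Filter ι} {x : ι → ℝ}
    {a c a' c' : ℝ} (hx : Tendsto x l atTop) (ha'c' : a' ≤ c')
    (h : ∃ᶠ i in l, x i ^ a + x i ^ c = x i ^ a' + x i ^ c') :
    c ≤ c' := by
  by_contra! hlt
  have hgap : ∀ᶠ i in l, 1 < x i ∧ 2 < x i ^ (c - c') :=
    (hx.eventually_gt_atTop 1).and
      (((tendsto_rpow_atTop (sub_pos.2 hlt)).comp hx).eventually_gt_atTop 2)
  obtain ⟨i, hi, hx1, hx2⟩ := (h.and_eventually hgap).exists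
  have hx0 : 0 < x i := one_pos.trans hx1
  have ha' : x i ^ a' ≤ x i ^ c' := rpow_le_rpow_of_exponent_le hx1.le ha'c'
  refine lt_irrefl (x i ^ c) ?_
  calc x i ^ c ≤ x i ^ a + x i ^ c := le_add_of_nonneg_left (rpow_nonneg hx0.le a)
    _ = x i ^ a' + x i ^ c' := hi
    _ ≤ 2 * x i ^ c' := by linarith
    _ < x i ^ (c - c') * x i ^ c' := mul_lt_mul_of_pos_right hx2 (rpow_pos_of_pos hx0 c')
    _ = x i ^ c := by rw [← rpow_add hx0, sub_add_cancel]

theorem tendsto_odd_mul_pi_div_two_atTop :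
    Tendsto (fun k : ℕ => ((2 * k + 1 : ℕ) : ℝ) * π / 2) atTop atTop := by
  have hodd : Tendsto (fun k : ℕ => 2 * k + 1) atTop atTop :=
    tendsto_atTop_mono (fun k => show k ≤ 2 * k + 1 by omega) tendsto_id
  exact ((tendsto_natCast_atTop_atTop.comp hodd).atTop_mul_const pi_pos).atTop_div_const two_pos

theorem le_of_rpow_add_rpow_eq_odd {a c a' c' : ℝ} (ha'c' : a' ≤ c')
    (h : ∀ n : ℕ, 1 ≤ n → Odd n →
      ((n : ℝ) * π / 2) ^ a + ((n : ℝ) * π / 2) ^ c =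
      ((n : ℝ) * π / 2) ^ a' + ((n : ℝ) * π / 2) ^ c') :
    c ≤ c' :=
  le_of_rpow_add_rpow_eq_frequently tendsto_odd_mul_pi_div_two_atTop ha'c'
    (Frequently.of_forall fun k => h _ (by omega) (odd_two_mul_add_one k))

theorem exponents_unique_general (α γ α' γ' : ℝ)
    (hαγ : α ≤ γ)
    (hαγ' : α' ≤ γ')
    (h : ∀ n : ℕ, 1 ≤ n → Odd n →
      ((n : ℝ) * π / 2) ^ α + ((n : ℝ) * π / 2) ^ γ =
      ((n : ℝ) * π / 2) ^ α' + ((n : ℝ) * π / 2) ^ γ') :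
    α = α' ∧ γ = γ' := by
  have hγ : γ = γ' :=
    le_antisymm (le_of_rpow_add_rpow_eq_odd hαγ' h)
      (le_of_rpow_add_rpow_eq_odd hαγ fun n hn hodd => (h n hn hodd).symm)
  have hone : (π / 2) ^ α + (π / 2) ^ γ = (π / 2) ^ α' + (π / 2) ^ γ' := by
    simpa using h 1 le_rfl odd_one
  have hπ : 1 < π / 2 := by linarith [pi_gt_three]
  refine ⟨(rpow_right_inj (by positivity) hπ.ne').1 ?_, hγ⟩
  rw [hγ] at hone
  linarith

/-- Equality of eigenvalue sequences along odd indices forces equality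
of the fractional exponents. -/
theorem exponents_unique (α γ α' γ' : ℝ)
    (hα : 0 < α) (hαγ : α ≤ γ) (hγ : γ < 2)
    (hα' : 0 < α') (hαγ' : α' ≤ γ') (hγ' : γ' < 2)
    (h : ∀ n : ℕ, 1 ≤ n → Odd n →
      ((n : ℝ) * π / 2) ^ α + ((n : ℝ) * π / 2) ^ γ =
      ((n : ℝ) * π / 2) ^ α' + ((n : ℝ) * π / 2) ^ γ') :
    α = α' ∧ γ = γ' :=
  exponents_unique_general α γ α' γ' hαγ hαγ' h
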